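/- (Treated-arm identity for the DR estimator.) Under no unmeasured confounding and the stated overlap conditions, the augmented IPW functional for the treated arm with misspecified propensity score and misspecified outcome regression satisfies E[(T·Y − (T − e*(X))·μ1*(X)) / e*(X)] − μ1 = E[((e(X) − e*(X))/e*(X)) · (μ1(X) − μ1*(X))]. -/

import Mathlib

/-!
With `e* = g ∘ X` and `μ₁* = h₁ ∘ X`, and since `T·Y = T·Y(1)`, the augmented IPW integrand
equals `T·Y(1)/e* + (μ₁*/e*)·(e* − T)`. Both weights `1/e*` and `μ₁*/e*` are `σ(X)`-measurable,
so the tower property replaces `T·Y(1)` by `E[T·Y(1) | X] = e·μ₁` (no unmeasured confounding) and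
`e* − T` by `e* − e`. The resulting integrand differs from `((e − e*)/e*)·(μ₁ − μ₁*)` by exactly
`μ₁`, whose integral is `E[Y(1)]`.

Conditional independence yields `E[f·g | m] = E[f | m]·E[g | m]` by integrating against the
regular conditional probability `condExpKernel`, under which `f` and `g` are independent for
almost every `ω`: it suffices to check this on the countable π-system of rational half-lines.
-/

open MeasureTheory ProbabilityTheory Set

namespace ProbabilityTheory

variable {Ω : Type*} {m mΩ : MeasurableSpace Ω} [StandardBorelSpace Ω]
  {μ : Measure Ω} [IsFiniteMeasure μ]

lemma ae_ae_eq_condExpKernel {β : Type*} (hm : m ≤ mΩ) {f f' : Ω → β} (h : f =ᵐ[μ] f') :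
    ∀ᵐ ω ∂(μ.trim hm), f =ᵐ[condExpKernel μ m ω] f' := by
  rw [← condExpKernel_comp_trim (μ := μ) hm] at h
  exact Measure.ae_ae_of_ae_comp h

variable {hm : m ≤ mΩ}

lemma CondIndepFun.congr_ae {β β' : Type*} [MeasurableSpace β] [MeasurableSpace β']
    {f f' : Ω → β} {g g' : Ω → β'} (h : CondIndepFun m hm f g μ) (hf : f =ᵐ[μ] f')
    (hg : g =ᵐ[μ] g') : CondIndepFun m hm f' g' μ :=
  Kernel.IndepFun.congr' h (ae_ae_eq_condExpKernel hm hf) (ae_ae_eq_condExpKernel hm hg)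

lemma CondIndepFun.ae_indepFun_condExpKernel {f g : Ω → ℝ} (h : CondIndepFun m hm f g μ)
    (hf : Measurable f) (hg : Measurable g) :
    ∀ᵐ ω ∂μ, IndepFun f g (condExpKernel μ m ω) := by
  set S : Set (Set ℝ) := ⋃ a : ℚ, {Iic (a : ℝ)}
  have hS : IsPiSystem S := Real.isPiSystem_Iic_rat
  have hgen (φ : Ω → ℝ) :
      MeasurableSpace.comap φ inferInstance = .generateFrom ((φ ⁻¹' ·) '' S) := by
    rw [← MeasurableSpace.comap_generateFrom, ← Real.borel_eq_generateFrom_Iic_rat,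
      ← BorelSpace.measurable_eq]
  have hrat : ∀ᵐ ω ∂μ, ∀ q r : ℚ,
      condExpKernel μ m ω (f ⁻¹' Iic (q : ℝ) ∩ g ⁻¹' Iic (r : ℝ))
        = condExpKernel μ m ω (f ⁻¹' Iic q) * condExpKernel μ m ω (g ⁻¹' Iic r) :=
    ae_of_ae_trim hm <| ae_all_iff.2 fun q => ae_all_iff.2 fun r =>
      h _ _ ⟨_, measurableSet_Iic, rfl⟩ ⟨_, measurableSet_Iic, rfl⟩
  filter_upwards [hrat] with ω hω
  refine IndepSets.indep hf.comap_le hg.comap_le (hS.comap f) (hS.comap g) (hgen f) (hgen g) ?_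
  rintro _ _ ⟨_, hs, rfl⟩ ⟨_, ht, rfl⟩
  obtain ⟨q, rfl⟩ : ∃ q : ℚ, Iic (q : ℝ) = _ := by simpa [S] using hs
  obtain ⟨r, rfl⟩ : ∃ r : ℚ, Iic (r : ℝ) = _ := by simpa [S] using ht
  exact Filter.Eventually.of_forall fun _ => hω q r

lemma CondIndepFun.condExp_mul_of_measurable {f g : Ω → ℝ} (h : CondIndepFun m hm f g μ)
    (hf : Measurable f) (hg : Measurable g) (hfi : Integrable f μ) (hgi : Integrable g μ)
    (hfgi : Integrable (f * g) μ) : μ[f * g | m] =ᵐ[μ] μ[f | m] * μ[g | m] := by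
  filter_upwards [condExp_ae_eq_integral_condExpKernel hm hfgi,
    condExp_ae_eq_integral_condExpKernel hm hfi, condExp_ae_eq_integral_condExpKernel hm hgi,
    h.ae_indepFun_condExpKernel hf hg] with ω hfg_eq hf_eq hg_eq hindep
  rw [Pi.mul_apply, hfg_eq, hf_eq, hg_eq]
  exact hindep.integral_mul_eq_mul_integral hf.aestronglyMeasurable hg.aestronglyMeasurable

lemma CondIndepFun.condExp_mul {f g : Ω → ℝ} (h : CondIndepFun m hm f g μ)
    (hf : Integrable f μ) (hg : Integrable g μ) (hfg : Integrable (f * g) μ) :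
    μ[f * g | m] =ᵐ[μ] μ[f | m] * μ[g | m] := by
  have hf' := hf.1.ae_eq_mk
  have hg' := hg.1.ae_eq_mk
  calc μ[f * g | m] =ᵐ[μ] μ[hf.1.mk f * hg.1.mk g | m] := condExp_congr_ae (hf'.mul hg')
    _ =ᵐ[μ] μ[hf.1.mk f | m] * μ[hg.1.mk g | m] :=
      (h.congr_ae hf' hg').condExp_mul_of_measurable hf.1.stronglyMeasurable_mk.measurable
        hg.1.stronglyMeasurable_mk.measurable (hf.congr hf') (hg.congr hg')
        (hfg.congr (hf'.mul hg'))
    _ =ᵐ[μ] μ[f | m] * μ[g | m] := (condExp_congr_ae hf'.symm).mul (condExp_congr_ae hg'.symm)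

end ProbabilityTheory

section DoublyRobust

variable {Ω : Type*} {m mΩ : MeasurableSpace Ω} {μ : Measure Ω}

lemma integrable_of_ae_condExp_ne_zero [NeZero μ] {f : Ω → ℝ} (h : ∀ᵐ ω ∂μ, μ[f | m] ω ≠ 0) :
    Integrable f μ := by
  by_contra hf
  simp only [condExp_of_not_integrable hf, Pi.zero_apply, ne_eq, not_true_eq_false,
    Filter.eventually_false_iff_eq_bot, ae_eq_bot] at h
  exact NeZero.ne μ h

lemma MeasureTheory.Integrable.inv_mul_of_le {F G : Ω → ℝ} {ν : ℝ} (hF : Integrable F μ)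
    (hG : AEMeasurable G μ) (hν : 0 < ν) (hνG : ∀ᵐ ω ∂μ, ν ≤ G ω) :
    Integrable (fun ω => (G ω)⁻¹ * F ω) μ :=
  hF.bdd_mul hG.inv.aestronglyMeasurable (c := ν⁻¹) <| hνG.mono fun ω h => by
    rw [norm_inv, Real.norm_eq_abs, abs_of_pos (hν.trans_le h)]
    exact inv_anti₀ hν h

lemma condExp_mul_ae_eq_of_stronglyMeasurable_left {w F F' : Ω → ℝ} (hw : StronglyMeasurable[m] w)
    (hwF : Integrable (fun ω => w ω * F ω) μ) (hF : Integrable F μ) (hF' : μ[F | m] =ᵐ[μ] F') :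
    μ[fun ω => w ω * F ω | m] =ᵐ[μ] fun ω => w ω * F' ω := by
  filter_upwards [condExp_mul_of_stronglyMeasurable_left hw hwF hF, hF'] with ω hpull hω
  exact hpull.trans (congrArg (w ω * ·) hω)

lemma integrable_mul_of_condExp_ae_eq {w F F' : Ω → ℝ} (hw : StronglyMeasurable[m] w)
    (hwF : Integrable (fun ω => w ω * F ω) μ) (hF : Integrable F μ) (hF' : μ[F | m] =ᵐ[μ] F') :
    Integrable (fun ω => w ω * F' ω) μ :=
  integrable_condExp.congr (condExp_mul_ae_eq_of_stronglyMeasurable_left hw hwF hF hF')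

lemma integral_mul_eq_of_condExp_ae_eq (hm : m ≤ mΩ) [SigmaFinite (μ.trim hm)] {w F F' : Ω → ℝ}
    (hw : StronglyMeasurable[m] w) (hwF : Integrable (fun ω => w ω * F ω) μ)
    (hF : Integrable F μ) (hF' : μ[F | m] =ᵐ[μ] F') :
    ∫ ω, w ω * F ω ∂μ = ∫ ω, w ω * F' ω ∂μ :=
  (integral_condExp hm).symm.trans
    (integral_congr_ae (condExp_mul_ae_eq_of_stronglyMeasurable_left hw hwF hF hF'))

theorem integral_aipw_sub_integral_eq (hm : m ≤ mΩ) [SigmaFinite (μ.trim hm)]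
    {T Y e μ₁ G H : Ω → ℝ} (hG : Measurable[m] G) (hH : Measurable[m] H)
    (hG₀ : ∀ᵐ ω ∂μ, G ω ≠ 0) (he : μ[T | m] =ᵐ[μ] e) (hμ₁ : μ[Y | m] =ᵐ[μ] μ₁)
    (hTY : μ[fun ω => T ω * Y ω | m] =ᵐ[μ] fun ω => e ω * μ₁ ω)
    (hT : Integrable T μ) (hGi : Integrable G μ) (hTYi : Integrable (fun ω => T ω * Y ω) μ)
    (hIPW : Integrable (fun ω => (G ω)⁻¹ * (T ω * Y ω)) μ)
    (hAIPW : Integrable (fun ω => (T ω * Y ω - (T ω - G ω) * H ω) / G ω) μ) :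
    ∫ ω, (T ω * Y ω - (T ω - G ω) * H ω) / G ω ∂μ - ∫ ω, Y ω ∂μ
      = ∫ ω, (e ω - G ω) / G ω * (μ₁ ω - H ω) ∂μ := by
  have hw₁ : StronglyMeasurable[m] fun ω => (G ω)⁻¹ := hG.inv.stronglyMeasurable
  have hw₂ : StronglyMeasurable[m] fun ω => H ω * (G ω)⁻¹ := (hH.mul hG.inv).stronglyMeasurable
  have hAug : Integrable (fun ω => H ω * (G ω)⁻¹ * (G ω - T ω)) μ :=
    (hAIPW.sub hIPW).congr <| ae_of_all _ fun ω => by simp only [Pi.sub_apply]; ring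
  have hAug_cond : μ[fun ω => G ω - T ω | m] =ᵐ[μ] fun ω => G ω - e ω := by
    filter_upwards [condExp_sub hGi hT m, he] with ω hsub heω
    refine hsub.trans ?_
    rw [Pi.sub_apply, condExp_of_stronglyMeasurable hm hG.stronglyMeasurable hGi, heω]
  have hIPW' := integrable_mul_of_condExp_ae_eq hw₁ hIPW hTYi hTY
  have hAug' := integrable_mul_of_condExp_ae_eq hw₂ hAug (hGi.sub hT) hAug_cond
  have hμ₁i : Integrable μ₁ μ := integrable_condExp.congr hμ₁
  have hRHS : (fun ω => (e ω - G ω) / G ω * (μ₁ ω - H ω)) =ᵐ[μ]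
      fun ω => (G ω)⁻¹ * (e ω * μ₁ ω) - μ₁ ω + H ω * (G ω)⁻¹ * (G ω - e ω) := by
    filter_upwards [hG₀] with ω hω
    field_simp
    ring
  calc ∫ ω, (T ω * Y ω - (T ω - G ω) * H ω) / G ω ∂μ - ∫ ω, Y ω ∂μ
      = (∫ ω, (G ω)⁻¹ * (T ω * Y ω) ∂μ)
          + (∫ ω, H ω * (G ω)⁻¹ * (G ω - T ω) ∂μ) - ∫ ω, μ₁ ω ∂μ := by
        rw [← integral_add hIPW hAug, ← integral_condExp hm (f := Y), integral_congr_ae hμ₁]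
        congr 2 with ω
        ring
    _ = (∫ ω, (G ω)⁻¹ * (e ω * μ₁ ω) ∂μ)
          + (∫ ω, H ω * (G ω)⁻¹ * (G ω - e ω) ∂μ) - ∫ ω, μ₁ ω ∂μ := by
        rw [integral_mul_eq_of_condExp_ae_eq hm hw₁ hIPW hTYi hTY,
          integral_mul_eq_of_condExp_ae_eq hm hw₂ hAug (hGi.sub hT) hAug_cond]
    _ = ∫ ω, (e ω - G ω) / G ω * (μ₁ ω - H ω) ∂μ := by
        rw [integral_congr_ae hRHS, integral_add (f := fun ω => _ - μ₁ ω) (hIPW'.sub hμ₁i) hAug',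
          integral_sub hIPW' hμ₁i]
        ring

end DoublyRobust

theorem dr_treated_identity_general
    {Ω : Type*} [MeasurableSpace Ω] [StandardBorelSpace Ω]
    {𝓧 : Type*} [MeasurableSpace 𝓧]
    (μ : Measure Ω) [IsProbabilityMeasure μ]
    (X : Ω → 𝓧) (hX : Measurable X)
    (T Y0 Y1 : Ω → ℝ)
    (hT01 : ∀ ω, T ω = 0 ∨ T ω = 1)
    (hY1int : Integrable Y1 μ)
    (Y : Ω → ℝ) (hY : Y = fun ω => T ω * Y1 ω + (1 - T ω) * Y0 ω)
    -- no unmeasured confounding: Y(t) ⟂ T | σ(X), t = 0, 1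
    (hNUC1 : CondIndepFun (MeasurableSpace.comap X inferInstance) hX.comap_le Y1 T μ)
    -- e(X): a version of P(T = 1 | σ(X)) = E[T | σ(X)]
    (eX : Ω → ℝ) (heX : eX =ᵐ[μ] μ[T | MeasurableSpace.comap X inferInstance])
    -- μ1(X): a version of E[Y(1) | σ(X)]
    (μ1X : Ω → ℝ) (hμ1X : μ1X =ᵐ[μ] μ[Y1 | MeasurableSpace.comap X inferInstance])
    -- overlap for the true propensity score
    (η : ℝ) (hη : 0 < η)
    (hover : ∀ᵐ ω ∂μ, η < eX ω ∧ eX ω < 1 - η)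
    -- misspecified propensity score e*(X) = g(X) and overlap under misspecification
    (g : 𝓧 → ℝ) (hg : Measurable g)
    (ν : ℝ) (hν : 0 < ν)
    (hover' : ∀ᵐ ω ∂μ, ν < g (X ω) ∧ g (X ω) < 1 - ν)
    -- misspecified outcome regression limit μ1*(X) = h1(X)
    (h1 : 𝓧 → ℝ) (hh1 : Measurable h1)
    -- integrability of the displayed functionals
    (hint1 : Integrable
      (fun ω => (T ω * Y ω - (T ω - g (X ω)) * h1 (X ω)) / g (X ω)) μ) :
    (∫ ω, (T ω * Y ω - (T ω - g (X ω)) * h1 (X ω)) / g (X ω) ∂μ) - (∫ ω, Y1 ω ∂μ)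
      = ∫ ω, ((eX ω - g (X ω)) / g (X ω)) * (μ1X ω - h1 (X ω)) ∂μ := by
  have hm := hX.comap_le
  have hgX : Measurable[MeasurableSpace.comap X inferInstance] fun ω => g (X ω) :=
    hg.comp (comap_measurable X)
  -- `T` is not assumed measurable; were it not integrable, `e(X)` would be the junk value `0`.
  have hT : Integrable T μ := integrable_of_ae_condExp_ne_zero <| by
    filter_upwards [heX, hover] with ω he ho
    exact he ▸ (hη.trans ho.1).ne'
  have hTY1 : Integrable (fun ω => T ω * Y1 ω) μ :=
    hY1int.bdd_mul hT.1 (c := 1) (ae_of_all _ fun ω => by rcases hT01 ω with h | h <;> simp [h])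
  have hG : Integrable (fun ω => g (X ω)) μ :=
    .of_bound (hg.comp hX).aestronglyMeasurable 1 <| hover'.mono fun ω h => by
      rw [Real.norm_eq_abs, abs_le]; constructor <;> linarith [h.1, h.2]
  have hTY (ω : Ω) : T ω * Y ω = T ω * Y1 ω := by rcases hT01 ω with h | h <;> simp [hY, h]
  simp only [hTY] at hint1 ⊢
  have hIPW := hTY1.inv_mul_of_le (hg.comp hX).aemeasurable hν (hover'.mono fun _ h => h.1.le)
  exact integral_aipw_sub_integral_eq hm hgX (hh1.comp (comap_measurable X))
    (hover'.mono fun _ h => (hν.trans h.1).ne') heX.symm hμ1X.symm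
    ((hNUC1.symm.condExp_mul hT hY1int hTY1).trans (heX.symm.mul hμ1X.symm))
    hT hG hTY1 hIPW hint1

/-- Treated-arm identity for the DR estimator:
`E[(T·Y − (T − e*(X))·μ1*(X)) / e*(X)] − μ1
  = E[((e(X) − e*(X))/e*(X)) · (μ1(X) − μ1*(X))]`. -/
theorem dr_treated_identity
    {Ω : Type*} [MeasurableSpace Ω] [StandardBorelSpace Ω]
    {𝓧 : Type*} [MeasurableSpace 𝓧]
    (μ : Measure Ω) [IsProbabilityMeasure μ]
    (X : Ω → 𝓧) (hX : Measurable X)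
    (T Y0 Y1 : Ω → ℝ)
    (hT01 : ∀ ω, T ω = 0 ∨ T ω = 1)
    (hY0int : Integrable Y0 μ) (hY1int : Integrable Y1 μ)
    (Y : Ω → ℝ) (hY : Y = fun ω => T ω * Y1 ω + (1 - T ω) * Y0 ω)
    -- no unmeasured confounding: Y(t) ⟂ T | σ(X), t = 0, 1
    (hNUC0 : CondIndepFun (MeasurableSpace.comap X inferInstance) hX.comap_le Y0 T μ)
    (hNUC1 : CondIndepFun (MeasurableSpace.comap X inferInstance) hX.comap_le Y1 T μ)
    -- e(X): a version of P(T = 1 | σ(X)) = E[T | σ(X)]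
    (eX : Ω → ℝ) (heX : eX =ᵐ[μ] μ[T | MeasurableSpace.comap X inferInstance])
    -- μ1(X): a version of E[Y(1) | σ(X)]
    (μ1X : Ω → ℝ) (hμ1X : μ1X =ᵐ[μ] μ[Y1 | MeasurableSpace.comap X inferInstance])
    -- overlap for the true propensity score
    (η : ℝ) (hη : 0 < η)
    (hover : ∀ᵐ ω ∂μ, η < eX ω ∧ eX ω < 1 - η)
    -- misspecified propensity score e*(X) = g(X) and overlap under misspecification
    (g : 𝓧 → ℝ) (hg : Measurable g)
    (ν : ℝ) (hν : 0 < ν)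
    (hover' : ∀ᵐ ω ∂μ, ν < g (X ω) ∧ g (X ω) < 1 - ν)
    -- misspecified outcome regression limit μ1*(X) = h1(X)
    (h1 : 𝓧 → ℝ) (hh1 : Measurable h1)
    -- integrability of the displayed functionals
    (hint1 : Integrable
      (fun ω => (T ω * Y ω - (T ω - g (X ω)) * h1 (X ω)) / g (X ω)) μ)
    (hint2 : Integrable
      (fun ω => ((eX ω - g (X ω)) / g (X ω)) * (μ1X ω - h1 (X ω))) μ) :
    (∫ ω, (T ω * Y ω - (T ω - g (X ω)) * h1 (X ω)) / g (X ω) ∂μ) - (∫ ω, Y1 ω ∂μ)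
      = ∫ ω, ((eX ω - g (X ω)) / g (X ω)) * (μ1X ω - h1 (X ω)) ∂μ :=
  dr_treated_identity_general μ X hX T Y0 Y1 hT01 hY1int Y hY hNUC1 eX heX μ1X hμ1X η hη hover g hg
    ν hν hover' h1 hh1 hint1
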